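/- arXiv:1511.07990 — 4 statements merged into one kernel-verified Lean document; each statement's English description precedes it below -/
import Mathlib

section
/- Let G be a finite simple graph and let G_1, G_2 be two proper induced subgraphs of G such that G = G_1 ∪ G_2 (every vertex and every edge of G lies in G_1 or in G_2) and the common vertex set of G_1 and G_2 induces a clique in G. Then G is perfect if and only if G_1 and G_2 are both perfect. -/
open Finset SimpleGraph

namespace TPerfection

variable {V : Type*}

/-- A stable (independent) set of vertices: pairwise non-adjacent. -/
def IsStableSet (G : SimpleGraph V) (S : Finset V) : Prop :=
  ∀ u ∈ S, ∀ v ∈ S, ¬ G.Adj u v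

/-- STAB(G): convex hull of incidence vectors of stable sets. -/
def stabPolytope (G : SimpleGraph V) [Fintype V] [DecidableEq V] : Set (V → ℝ) :=
  convexHull ℝ { x | ∃ S : Finset V, IsStableSet G S ∧ x = fun v => if v ∈ S then (1 : ℝ) else 0 }

/-- `c` is an induced (chordless) cycle of `G`. -/
def IsInducedCycle (G : SimpleGraph V) {u : V} (c : G.Walk u u) : Prop :=
  c.IsCycle ∧ ∀ x y : V, x ∈ c.support → y ∈ c.support → G.Adj x y → s(x, y) ∈ c.edges

def boxConstraints (x : V → ℝ) : Prop := ∀ v, 0 ≤ x v ∧ x v ≤ 1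

def edgeConstraints (G : SimpleGraph V) (x : V → ℝ) : Prop :=
  ∀ u v : V, G.Adj u v → x u + x v ≤ 1

def cliqueConstraints (G : SimpleGraph V) (x : V → ℝ) : Prop :=
  ∀ K : Finset V, G.IsClique (K : Set V) → ∑ v ∈ K, x v ≤ 1

def oddCycleConstraints [DecidableEq V] (G : SimpleGraph V) (x : V → ℝ) : Prop :=
  ∀ (u : V) (c : G.Walk u u), IsInducedCycle G c → Odd c.length →
    ∑ v ∈ c.support.toFinset, x v ≤ ((c.length : ℝ) - 1) / 2

/-- Solution set of box, edge and odd-cycle constraints. -/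
def tPolytope (G : SimpleGraph V) [DecidableEq V] : Set (V → ℝ) :=
  { x | boxConstraints x ∧ edgeConstraints G x ∧ oddCycleConstraints G x }

/-- Solution set of box, clique and odd-cycle constraints. -/
def hPolytope (G : SimpleGraph V) [DecidableEq V] : Set (V → ℝ) :=
  { x | boxConstraints x ∧ cliqueConstraints G x ∧ oddCycleConstraints G x }

/-- Solution set of box and clique constraints. -/
def qstabPolytope (G : SimpleGraph V) : Set (V → ℝ) :=
  { x | boxConstraints x ∧ cliqueConstraints G x }

def TPerfect (G : SimpleGraph V) [Fintype V] [DecidableEq V] : Prop :=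
  tPolytope G = stabPolytope G

def HPerfect (G : SimpleGraph V) [Fintype V] [DecidableEq V] : Prop :=
  hPolytope G = stabPolytope G

/-- The clique number, as an extended natural number. -/
noncomputable def cliqueNumber (G : SimpleGraph V) : ℕ∞ :=
  sSup ((fun n : ℕ => (n : ℕ∞)) '' { n | ∃ K : Finset V, G.IsNClique n K })

/-- A graph is perfect if every induced subgraph has chromatic number equal to
clique number. -/
def IsPerfect (G : SimpleGraph V) : Prop :=
  ∀ S : Set V, (G.induce S).chromaticNumber = cliqueNumber (G.induce S)

/-- `G` is a loose wheel with hub `hub` and rim `c`: `c` is a cycle, `hub` lies outside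
of it and has at least three neighbours on it, and the rim together with the hub
comprise all vertices and edges of `G`. -/
structure IsLooseWheel (G : SimpleGraph V) (hub : V) {u : V} (c : G.Walk u u) : Prop where
  isCycle : c.IsCycle
  hub_not_mem : hub ∉ c.support
  spokes : ∃ w₁ w₂ w₃ : V, w₁ ∈ c.support ∧ w₂ ∈ c.support ∧ w₃ ∈ c.support ∧
    w₁ ≠ w₂ ∧ w₁ ≠ w₃ ∧ w₂ ≠ w₃ ∧ G.Adj hub w₁ ∧ G.Adj hub w₂ ∧ G.Adj hub w₃
  vertex_cover : ∀ w : V, w ∈ c.support ∨ w = hub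
  edge_cover : ∀ x y : V, G.Adj x y → s(x, y) ∈ c.edges ∨ x = hub ∨ y = hub

/-- A segment of a loose wheel: a path of the rim joining two neighbours of the hub
and containing no other neighbour of the hub. -/
def IsSegment (G : SimpleGraph V) (hub : V) {u : V} (c : G.Walk u u)
    {a b : V} (p : G.Walk a b) : Prop :=
  p.IsPath ∧ a ≠ b ∧ G.Adj hub a ∧ G.Adj hub b ∧
    (∀ e ∈ p.edges, e ∈ c.edges) ∧
    (∀ w ∈ p.support, G.Adj hub w → w = a ∨ w = b)

/-- `G` is a loose odd wheel: a loose wheel with odd rim having at least three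
(pairwise distinct, hence pairwise edge-disjoint) segments of odd length. -/
def IsLooseOddWheel [DecidableEq V] (G : SimpleGraph V) : Prop :=
  ∃ (hub u : V) (c : G.Walk u u), IsLooseWheel G hub c ∧ Odd c.length ∧
    ∃ (a₁ b₁ : V) (p₁ : G.Walk a₁ b₁) (a₂ b₂ : V) (p₂ : G.Walk a₂ b₂)
      (a₃ b₃ : V) (p₃ : G.Walk a₃ b₃),
      IsSegment G hub c p₁ ∧ IsSegment G hub c p₂ ∧ IsSegment G hub c p₃ ∧
      Odd p₁.length ∧ Odd p₂.length ∧ Odd p₃.length ∧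
      Disjoint p₁.edges.toFinset p₂.edges.toFinset ∧
      Disjoint p₁.edges.toFinset p₃.edges.toFinset ∧
      Disjoint p₂.edges.toFinset p₃.edges.toFinset

/-- The neighbourhood of `v` is a stable set. -/
def StableNeighborhood (G : SimpleGraph V) (v : V) : Prop :=
  ∀ x y : V, G.Adj v x → G.Adj v y → ¬ G.Adj x y

/-- The t-contraction of `G` at `v`: delete `{v} ∪ N(v)` and add a new vertex
(`none`) adjacent exactly to the remaining vertices having a neighbour in `N(v)`. -/
def tContract (G : SimpleGraph V) (v : V) :
    SimpleGraph (Option { w : V // w ≠ v ∧ ¬ G.Adj v w }) where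
  Adj x y :=
    match x, y with
    | none, none => False
    | none, some b => ∃ n, G.Adj v n ∧ G.Adj b.1 n
    | some a, none => ∃ n, G.Adj v n ∧ G.Adj a.1 n
    | some a, some b => G.Adj a.1 b.1
  symm := by
    constructor
    rintro (_ | a) (_ | b) h
    · exact h
    · exact h
    · exact h
    · exact h.symm
  loopless := by
    constructor
    rintro (_ | a) h
    · exact h
    · exact G.loopless.irrefl _ h

/-- The wheel with hub `none` and rim the cycle of length `k` on `Fin k`. -/
def wheelGraph (k : ℕ) : SimpleGraph (Option (Fin k)) where
  Adj x y :=
    match x, y with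
    | none, none => False
    | none, some _ => True
    | some _, none => True
    | some i, some j => i ≠ j ∧ ((i.1 + 1) % k = j.1 ∨ (j.1 + 1) % k = i.1)
  symm := by
    constructor
    rintro (_ | i) (_ | j) h
    · exact h
    · trivial
    · trivial
    · exact ⟨h.1.symm, h.2.symm⟩
  loopless := by
    constructor
    rintro (_ | i) h
    · exact h
    · exact h.1 rfl

/-- One step of t-contraction between (isomorphism classes of) graphs. -/
def TContractStep : (Σ α : Type, SimpleGraph α) → (Σ α : Type, SimpleGraph α) → Prop :=
  fun G H => ∃ v : G.1, StableNeighborhood G.2 v ∧ Nonempty (H.2 ≃g tContract G.2 v)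

/-!
Perfection passes to induced subgraphs, which gives one direction. Conversely, every induced
subgraph of `G` again splits along a clique cutset into induced subgraphs of `G₁` and `G₂`, so it
suffices to show `χ(G) ≤ ω(G)`, and we may assume `ω(G)` finite. Colour `G₁` and `G₂` with `ω(G)`
colours each. The cutset is a clique, so both colourings are injective on it, and permuting the
colours of `G₂` makes them agree there; since every edge lies in `G₁` or `G₂`, the union is a
proper colouring of `G`.
-/

section

variable {W : Type*} {G : SimpleGraph V} {H : SimpleGraph W} {S₁ S₂ : Set V}

lemma cliqueNumber_le_of_embedding (f : H ↪g G) : cliqueNumber H ≤ cliqueNumber G := by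
  refine sSup_le ?_
  rintro _ ⟨n, ⟨K, hK⟩, rfl⟩
  refine le_sSup ⟨n, ⟨K.map f.toEmbedding, hK.map.mono ?_⟩, rfl⟩
  exact (map_le_iff_le_comap _ _ _).2 fun _ _ h => f.map_adj_iff.2 h

lemma cliqueNumber_congr (e : H ≃g G) : cliqueNumber H = cliqueNumber G :=
  le_antisymm (cliqueNumber_le_of_embedding e.toEmbedding)
    (cliqueNumber_le_of_embedding e.symm.toEmbedding)

lemma cliqueNumber_le_chromaticNumber : cliqueNumber G ≤ G.chromaticNumber := by
  refine sSup_le ?_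
  rintro _ ⟨n, ⟨K, hK⟩, rfl⟩
  exact hK.card_eq ▸ hK.isClique.card_le_chromaticNumber

lemma IsPerfect.chromaticNumber_eq (hG : IsPerfect G) : G.chromaticNumber = cliqueNumber G := by
  rw [← chromaticNumber_congr (induceUnivIso G), ← cliqueNumber_congr (induceUnivIso G)]
  exact hG Set.univ

lemma IsPerfect.of_embedding (hG : IsPerfect G) (f : H ↪g G) : IsPerfect H := by
  intro S
  let e := Embedding.isoInduceRange ((Embedding.induce S).trans f)
  rw [chromaticNumber_congr e, cliqueNumber_congr e]
  exact hG _

def induceInduceEmbedding (G : SimpleGraph V) (S T : Set V) :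
    (G.induce T).induce (Subtype.val ⁻¹' S) ↪g G.induce S where
  toFun x := ⟨x.1.1, x.2⟩
  inj' _ _ h := by ext; simpa using congrArg Subtype.val h
  map_rel_iff' := Iff.rfl

lemma exists_perm_comp_eq {α β : Type*} [Finite β] {f g : α → β} (hf : Function.Injective f)
    (hg : Function.Injective g) : ∃ σ : Equiv.Perm β, ∀ a, σ (g a) = f a := by
  classical
  let e := (Equiv.ofInjective g hg).symm.trans (Equiv.ofInjective f hf)
  refine ⟨e.extendSubtype, fun a => ?_⟩
  rw [e.extendSubtype_apply_of_mem (g a) ⟨a, rfl⟩]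
  simp [e]

lemma nonempty_coloring_of_eqOn_inter {β : Type*} (hunion : S₁ ∪ S₂ = Set.univ)
    (hedges : ∀ u v : V, G.Adj u v → (u ∈ S₁ ∧ v ∈ S₁) ∨ (u ∈ S₂ ∧ v ∈ S₂))
    (c₁ : (G.induce S₁).Coloring β) (c₂ : (G.induce S₂).Coloring β)
    (hc : ∀ v (hv : v ∈ S₁ ∩ S₂), c₁ ⟨v, hv.1⟩ = c₂ ⟨v, hv.2⟩) : Nonempty (G.Coloring β) := by
  classical
  have mem₂ (v : V) (hv : v ∉ S₁) : v ∈ S₂ :=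
    (hunion.symm ▸ Set.mem_univ v : v ∈ S₁ ∪ S₂).resolve_left hv
  let c (v : V) : β := if h : v ∈ S₁ then c₁ ⟨v, h⟩ else c₂ ⟨v, mem₂ v h⟩
  have hc₁ (v : V) (h : v ∈ S₁) : c v = c₁ ⟨v, h⟩ := dif_pos h
  have hc₂ (v : V) (h : v ∈ S₂) : c v = c₂ ⟨v, h⟩ := by
    by_cases h₁ : v ∈ S₁
    · rw [hc₁ v h₁, hc v ⟨h₁, h⟩]
    · exact dif_neg h₁
  refine ⟨Coloring.mk c fun {u v} huv => ?_⟩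
  rcases hedges u v huv with ⟨hu, hv⟩ | ⟨hu, hv⟩
  · rw [hc₁ u hu, hc₁ v hv]
    exact c₁.valid (G := G.induce S₁) huv
  · rw [hc₂ u hu, hc₂ v hv]
    exact c₂.valid (G := G.induce S₂) huv

lemma colorable_of_clique_cutset {n : ℕ} (hunion : S₁ ∪ S₂ = Set.univ)
    (hedges : ∀ u v : V, G.Adj u v → (u ∈ S₁ ∧ v ∈ S₁) ∨ (u ∈ S₂ ∧ v ∈ S₂))
    (hclique : G.IsClique (S₁ ∩ S₂)) (h₁ : (G.induce S₁).Colorable n)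
    (h₂ : (G.induce S₂).Colorable n) : G.Colorable n := by
  obtain ⟨c₁⟩ := h₁
  obtain ⟨c₂⟩ := h₂
  have hf₁ : Function.Injective fun x : ↥(S₁ ∩ S₂) => c₁ ⟨x, x.2.1⟩ := fun x y h =>
    by_contra fun hne => c₁.valid (v := ⟨x, x.2.1⟩) (w := ⟨y, y.2.1⟩)
      (hclique x.2 y.2 (Subtype.coe_injective.ne hne)) h
  have hf₂ : Function.Injective fun x : ↥(S₁ ∩ S₂) => c₂ ⟨x, x.2.2⟩ := fun x y h =>
    by_contra fun hne => c₂.valid (v := ⟨x, x.2.2⟩) (w := ⟨y, y.2.2⟩)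
      (hclique x.2 y.2 (Subtype.coe_injective.ne hne)) h
  obtain ⟨σ, hσ⟩ := exists_perm_comp_eq hf₁ hf₂
  let c₂' : (G.induce S₂).Coloring (Fin n) :=
    Coloring.mk (σ ∘ c₂) fun h => σ.injective.ne (c₂.valid h)
  exact nonempty_coloring_of_eqOn_inter hunion hedges c₁ c₂' fun v hv => (hσ ⟨v, hv⟩).symm

lemma chromaticNumber_eq_cliqueNumber_of_clique_cutset (hunion : S₁ ∪ S₂ = Set.univ)
    (hedges : ∀ u v : V, G.Adj u v → (u ∈ S₁ ∧ v ∈ S₁) ∨ (u ∈ S₂ ∧ v ∈ S₂))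
    (hclique : G.IsClique (S₁ ∩ S₂)) (h₁ : IsPerfect (G.induce S₁))
    (h₂ : IsPerfect (G.induce S₂)) : G.chromaticNumber = cliqueNumber G := by
  refine le_antisymm ?_ cliqueNumber_le_chromaticNumber
  by_cases hω : cliqueNumber G = ⊤
  · exact hω ▸ le_top
  obtain ⟨N, hN⟩ := ENat.ne_top_iff_exists.1 hω
  have colorable (S : Set V) (hS : IsPerfect (G.induce S)) : (G.induce S).Colorable N := by
    rw [← chromaticNumber_le_iff_colorable, hS.chromaticNumber_eq, hN]
    exact cliqueNumber_le_of_embedding (Embedding.induce S)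
  rw [← hN]
  exact (colorable_of_clique_cutset hunion hedges hclique (colorable S₁ h₁)
    (colorable S₂ h₂)).chromaticNumber_le

end

theorem perfect_iff_of_clique_cutset_general {V : Type*} (G : SimpleGraph V)
    (S₁ S₂ : Set V)
    (hunion : S₁ ∪ S₂ = Set.univ)
    (hedges : ∀ u v : V, G.Adj u v → (u ∈ S₁ ∧ v ∈ S₁) ∨ (u ∈ S₂ ∧ v ∈ S₂))
    (hclique : G.IsClique (S₁ ∩ S₂)) :
    IsPerfect G ↔ IsPerfect (G.induce S₁) ∧ IsPerfect (G.induce S₂) := by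
  refine ⟨fun hG => ⟨hG.of_embedding (Embedding.induce S₁),
    hG.of_embedding (Embedding.induce S₂)⟩, fun ⟨hp₁, hp₂⟩ T => ?_⟩
  refine chromaticNumber_eq_cliqueNumber_of_clique_cutset (S₁ := Subtype.val ⁻¹' S₁)
    (S₂ := Subtype.val ⁻¹' S₂) ?_ (fun u v => hedges u v)
    (fun x hx y hy hne => hclique hx hy (Subtype.coe_injective.ne hne))
    (hp₁.of_embedding (induceInduceEmbedding G S₁ T))
    (hp₂.of_embedding (induceInduceEmbedding G S₂ T))
  rw [← Set.preimage_union, hunion, Set.preimage_univ]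

/-- If `G` is the union of two proper induced subgraphs `G₁`, `G₂`
(induced on vertex sets `S₁`, `S₂`) whose common vertex set induces a clique, then
`G` is perfect iff both `G₁` and `G₂` are perfect. -/
theorem perfect_iff_of_clique_cutset {V : Type*} [Fintype V] (G : SimpleGraph V)
    (S₁ S₂ : Set V) (h₁ : S₁ ≠ Set.univ) (h₂ : S₂ ≠ Set.univ)
    (hunion : S₁ ∪ S₂ = Set.univ)
    (hedges : ∀ u v : V, G.Adj u v → (u ∈ S₁ ∧ v ∈ S₁) ∨ (u ∈ S₂ ∧ v ∈ S₂))
    (hclique : G.IsClique (S₁ ∩ S₂)) :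
    IsPerfect G ↔ IsPerfect (G.induce S₁) ∧ IsPerfect (G.induce S₂) :=
  perfect_iff_of_clique_cutset_general G S₁ S₂ hunion hedges hclique

end TPerfection
end

section
/- Every induced subgraph of an h-perfect finite simple graph is h-perfect. -/
/-! Extend a point `x` of the h-polytope of `G[S]` by `0` outside `S`. Its clique constraints in `G`
restrict to clique constraints of `G[S]`. An induced odd cycle of `G` inside `S` is an induced odd
cycle of `G[S]`; an odd cycle leaving `S` passes through a vertex of weight `0`, and pairing up the
remaining vertices along the cycle, the edge constraints bound its weight by `(|C| - 1) / 2`. So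
the extension lies in `STAB(G)` by h-perfection, and restricting a convex combination of stable
sets of `G` to `S` gives one of stable sets of `G[S]`. -/

open Finset SimpleGraph

namespace TPerfection

variable {V : Type*}

variable {G : SimpleGraph V} {x : V → ℝ}

lemma edgeConstraints_of_cliqueConstraints (hx : cliqueConstraints G x) : edgeConstraints G x := by
  intro u v huv
  classical
  have hK : G.IsClique (({u, v} : Finset V) : Set V) := by
    rw [coe_pair]; exact isClique_pair.mpr fun _ => huv
  simpa [sum_pair huv.ne] using hx {u, v} hK

lemma sum_support_le_of_even_length (hx : edgeConstraints G x) :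
    ∀ {a b : V} (p : G.Walk a b), Even p.length →
      (p.support.map x).sum ≤ p.length / 2 + x b
  | _, _, .nil, _ => by simp
  | _, _, .cons _ .nil, he => by simp at he
  | _, _, .cons h (.cons _ q), he => by
      have ih := sum_support_le_of_even_length hx q (by simpa [Nat.even_add_one] using he)
      have := hx _ _ h
      simp only [Walk.support_cons, List.map_cons, List.sum_cons, Walk.length_cons]
      push_cast
      linarith

lemma sum_le_of_isCycle_of_start_eq_zero [DecidableEq V] (hx : edgeConstraints G x) {w : V}
    {c : G.Walk w w} (hc : c.IsCycle) (hodd : Odd c.length) (hw : x w = 0) :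
    ∑ v ∈ c.support.toFinset, x v ≤ ((c.length : ℝ) - 1) / 2 := by
  cases c with
  | nil => simp at hodd
  | cons h q =>
    have hnodup : q.support.Nodup := by simpa using hc.support_nodup
    have hsupp : (Walk.cons h q).support.toFinset = q.support.toFinset := by
      simp [Walk.support_cons, List.toFinset_cons, q.end_mem_support]
    have hq := sum_support_le_of_even_length hx q (by simpa [Nat.odd_add_one] using hodd)
    rw [hsupp, List.sum_toFinset x hnodup, Walk.length_cons]
    push_cast
    linarith

lemma sum_le_of_isCycle_of_eq_zero [DecidableEq V] (hx : edgeConstraints G x) {u w : V}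
    {c : G.Walk u u} (hc : c.IsCycle) (hodd : Odd c.length) (hw : w ∈ c.support)
    (hw0 : x w = 0) :
    ∑ v ∈ c.support.toFinset, x v ≤ ((c.length : ℝ) - 1) / 2 := by
  have hsupp : c.support.toFinset = (c.rotate w hw).support.toFinset := by
    ext; simp
  rw [hsupp, ← c.length_rotate w hw]
  exact sum_le_of_isCycle_of_start_eq_zero hx (hc.rotate hw) (by simpa using hodd) hw0

lemma exists_mem_support_notMem_of_isStableSet {T : Finset V} (hT : IsStableSet G T) {u : V}
    (c : G.Walk u u) (hc : ¬ c.Nil) : ∃ w ∈ c.support, w ∉ T := by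
  cases c with
  | nil => simp at hc
  | cons h _ =>
    by_cases hu : u ∈ T
    · exact ⟨_, by simp, fun hv => hT _ hu _ hv h⟩
    · exact ⟨u, by simp, hu⟩

lemma indicator_mem_hPolytope [DecidableEq V] {T : Finset V} (hT : IsStableSet G T) :
    (fun v => if v ∈ T then (1 : ℝ) else 0) ∈ hPolytope G := by
  have hclique : cliqueConstraints G fun v => if v ∈ T then (1 : ℝ) else 0 := by
    intro K hK
    rw [sum_boole, Nat.cast_le_one, card_le_one]
    intro a ha b hb
    simp only [mem_filter] at ha hb
    by_contra hab
    exact hT a ha.2 b hb.2 (hK ha.1 hb.1 hab)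
  refine ⟨fun v => by dsimp only; split_ifs <;> norm_num, hclique, fun u c hc hodd => ?_⟩
  obtain ⟨w, hw, hwT⟩ := exists_mem_support_notMem_of_isStableSet hT c hc.1.not_nil
  exact sum_le_of_isCycle_of_eq_zero (edgeConstraints_of_cliqueConstraints hclique) hc.1 hodd hw
    (if_neg hwT)

lemma convex_hPolytope [DecidableEq V] : Convex ℝ (hPolytope G) := by
  have hsum (K : Finset V) (C : ℝ) : Convex ℝ {x : V → ℝ | ∑ v ∈ K, x v ≤ C} :=
    convex_halfSpace_le ⟨fun x y => sum_add_distrib, fun c x => (mul_sum ..).symm⟩ C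
  rintro x ⟨hx₁, hx₂, hx₃⟩ y ⟨hy₁, hy₂, hy₃⟩ a b ha hb hab
  refine ⟨fun v => ⟨?_, ?_⟩, fun K hK => hsum K 1 (hx₂ K hK) (hy₂ K hK) ha hb hab,
    fun u c hc hodd => hsum _ _ (hx₃ u c hc hodd) (hy₃ u c hc hodd) ha hb hab⟩
  · have := (hx₁ v).1; have := (hy₁ v).1
    simp only [Pi.add_apply, Pi.smul_apply, smul_eq_mul]
    positivity
  · simpa using hsum {v} 1 (by simpa using (hx₁ v).2) (by simpa using (hy₁ v).2) ha hb hab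

lemma stabPolytope_subset_hPolytope [Fintype V] [DecidableEq V] :
    stabPolytope G ⊆ hPolytope G :=
  convexHull_min (by rintro _ ⟨T, hT, rfl⟩; exact indicator_mem_hPolytope hT) convex_hPolytope

lemma IsInducedCycle.of_map {W : Type*} {G' : SimpleGraph W} (f : G ↪g G') {u : V}
    {p : G.Walk u u} (hp : IsInducedCycle G' (p.map f.toHom)) : IsInducedCycle G p := by
  refine ⟨(Walk.isCycle_map_iff_of_injective f.injective).mp hp.1, fun a b ha hb hab => ?_⟩
  have hfab := hp.2 (f a) (f b) (by simp [Walk.support_map, ha]) (by simp [Walk.support_map, hb])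
    (f.map_adj_iff.mpr hab)
  obtain ⟨e, he, hfe⟩ := List.mem_map.mp (Walk.edges_map f.toHom p ▸ hfab)
  rwa [← Sym2.map.injective f.injective (hfe.trans (Sym2.map_mk ..).symm)]

section InducedSubgraph

variable [DecidableEq V] {S : Set V} {x : S → ℝ}

lemma extend_mem_hPolytope (hx : x ∈ hPolytope (G.induce S)) :
    Function.extend Subtype.val x 0 ∈ hPolytope G := by
  obtain ⟨hbox, hclique, hodd⟩ := hx
  set y := Function.extend Subtype.val x 0
  have hy_val (w : S) : y w = x w := Subtype.val_injective.extend_apply x 0 w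
  have hy_out (v : V) (hv : v ∉ S) : y v = 0 :=
    Function.extend_apply' _ _ _ (by rintro ⟨w, rfl⟩; exact hv w.2)
  have hybox : boxConstraints y := fun v => by
    by_cases hv : v ∈ S
    · simpa [hy_val ⟨v, hv⟩] using hbox ⟨v, hv⟩
    · simp [hy_out v hv]
  have hyclique : cliqueConstraints G y := by
    intro K hK
    rw [← sum_preimage Subtype.val K Subtype.val_injective.injOn y
      (fun v _ hv => hy_out v (by simpa using hv))]
    simp only [hy_val]
    refine hclique _ (isClique_induce_iff.mpr (hK.subset ?_))
    simp
  refine ⟨hybox, hyclique, fun u c hc hc_odd => ?_⟩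
  by_cases hcS : ∀ v ∈ c.support, v ∈ S
  · set p := c.induce S hcS
    have hpc : p.map (Embedding.induce S).toHom = c := c.map_induce hcS
    have hp : IsInducedCycle (G.induce S) p :=
      IsInducedCycle.of_map (Embedding.induce S) (by rwa [hpc])
    have hlen : p.length = c.length := by
      rw [← Walk.length_map (Embedding.induce S).toHom, hpc]; rfl
    have hsupp : c.support = p.support.map (Embedding.induce (G := G) S).toHom := by
      rw [← Walk.support_map, hpc]; rfl
    have hsum : ∑ v ∈ c.support.toFinset, y v = ∑ w ∈ p.support.toFinset, x w := by
      have himage : c.support.toFinset = p.support.toFinset.image Subtype.val := by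
        ext v; simp [hsupp]
      rw [himage, sum_image (fun a _ b _ => Subtype.ext)]
      simp only [hy_val]
    rw [hsum, ← hlen]
    exact hodd _ p hp (hlen ▸ hc_odd)
  · push Not at hcS
    obtain ⟨w, hw, hwS⟩ := hcS
    exact sum_le_of_isCycle_of_eq_zero (edgeConstraints_of_cliqueConstraints hyclique) hc.1
      hc_odd hw (hy_out w hwS)

lemma restrict_mem_stabPolytope [Fintype V] [Fintype S] {y : V → ℝ} (hy : y ∈ stabPolytope G) :
    (fun v : S => y v) ∈ stabPolytope (G.induce S) := by
  classical
  let restrict : (V → ℝ) →ₗ[ℝ] (S → ℝ) := LinearMap.funLeft ℝ ℝ Subtype.val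
  refine convexHull_mono ?_ ((restrict.image_convexHull _).subset ⟨y, hy, rfl⟩)
  rintro _ ⟨_, ⟨T, hT, rfl⟩, rfl⟩
  refine ⟨T.subtype (· ∈ S), fun a ha b hb => hT a (mem_subtype.mp ha) b (mem_subtype.mp hb), ?_⟩
  funext v
  simp [restrict, LinearMap.funLeft_apply]

end InducedSubgraph

/-- Every induced subgraph of an h-perfect finite simple graph is
h-perfect. -/
theorem hPerfect_induce {V : Type*} [Fintype V] [DecidableEq V] (G : SimpleGraph V)
    (h : HPerfect G) (S : Set V) [Fintype S] :
    HPerfect (G.induce S) := by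
  refine Set.Subset.antisymm (fun x hx => ?_) (stabPolytope_subset_hPolytope (G := G.induce S))
  have hext : Function.extend Subtype.val x 0 ∈ stabPolytope G := h ▸ extend_mem_hPolytope hx
  simpa only [Subtype.val_injective.extend_apply] using restrict_mem_stabPolytope (S := S) hext

end TPerfection
end

section
/- Every perfect finite simple graph containing no clique on four vertices is t-perfect. -/
open Finset SimpleGraph

namespace SimpleGraph.Walk
variable {V : Type*} {G : SimpleGraph V}

theorem dropLast_support_perm_tail_support {u : V} (c : G.Walk u u) :
    c.support.dropLast.Perm c.support.tail := by
  have h : c.support.dropLast ++ [u] = u :: c.support.tail := by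
    simp [c.cons_tail_support]
  exact (List.perm_cons u).mp (h ▸ (List.perm_append_singleton u _).symm)

theorem IsCycle.toFinset_tail_support [DecidableEq V] {u : V} {c : G.Walk u u} (hc : c.IsCycle) :
    c.support.tail.toFinset = c.support.toFinset := by
  ext v
  rw [List.mem_toFinset, List.mem_toFinset, ← c.cons_tail_support, List.mem_cons, List.tail_cons]
  exact ⟨Or.inr, fun h => h.elim (fun h => h ▸ c.end_mem_tail_support hc.not_nil) id⟩

end SimpleGraph.Walk

namespace TPerfection
variable {V : Type*}

theorem IsStableSet.two_mul_card_filter_le_length [DecidableEq V] {G : SimpleGraph V}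
    {S : Finset V} (hS : IsStableSet G S) {u : V} {c : G.Walk u u} (hc : c.IsCycle) :
    2 * #{v ∈ c.support.toFinset | v ∈ S} ≤ c.length := by
  have hcount : #{v ∈ c.support.toFinset | v ∈ S} = c.support.tail.countP (· ∈ S) := by
    rw [← hc.toFinset_tail_support, List.countP_eq_length_filter,
      ← List.toFinset_card_of_nodup (hc.support_nodup.filter _), List.toFinset_filter]
    simp
  have hfst : c.darts.countP (·.fst ∈ S) = c.support.tail.countP (· ∈ S) := by
    rw [← c.dropLast_support_perm_tail_support.countP_eq, ← c.map_fst_darts, List.countP_map]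
    rfl
  have hsnd : c.darts.countP (·.snd ∈ S) = c.support.tail.countP (· ∈ S) := by
    rw [← c.map_snd_darts, List.countP_map]
    rfl
  have hdisj : c.darts.countP (·.snd ∈ S) ≤ c.darts.countP (·.fst ∉ S) :=
    List.countP_mono_left fun d _ hd => by
      simp only [decide_eq_true_eq] at hd ⊢
      exact fun hd' => hS _ hd' _ hd d.adj
  have := c.darts.length_eq_countP_add_countP (·.fst ∈ S)
  simp only [decide_eq_true_eq, decide_not] at this hdisj
  rw [c.length_darts] at this
  omega

theorem isInducedCycle_triangle {G : SimpleGraph V} {a b c : V} (hab : G.Adj a b) (hbc : G.Adj b c)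
    (hca : G.Adj c a) : IsInducedCycle G (.cons hab (.cons hbc (.cons hca .nil))) := by
  refine ⟨?_, ?_⟩
  · simp [Walk.cons_isCycle_iff, hab.ne, hbc.ne, hca.ne, hca.ne.symm, hab.ne.symm]
  · simp only [Walk.support_cons, Walk.support_nil, Walk.edges_cons, Walk.edges_nil,
      List.mem_cons, List.not_mem_nil, or_false]
    rintro x y (rfl | rfl | rfl | rfl) (rfl | rfl | rfl | rfl) hxy <;> simp_all [Sym2.eq_swap]

theorem triangle_sum_le_one [DecidableEq V] {G : SimpleGraph V} {x : V → ℝ}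
    (hx : oddCycleConstraints G x) {a b c : V} (hab : G.Adj a b) (hbc : G.Adj b c)
    (hca : G.Adj c a) : x a + x b + x c ≤ 1 := by
  have := hx a _ (isInducedCycle_triangle hab hbc hca) ⟨1, rfl⟩
  norm_num [Finset.sum_insert, hab.ne, hbc.ne, hca.ne, hab.ne.symm, hca.ne.symm] at this
  linarith

theorem tPolytope_subset_qstabPolytope [DecidableEq V] {G : SimpleGraph V} (h4 : G.CliqueFree 4) :
    tPolytope G ⊆ qstabPolytope G := by
  rintro x ⟨hbox, hedge, hodd⟩
  refine ⟨hbox, fun K hK => ?_⟩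
  have hcard : #K < 4 := by
    by_contra! h
    obtain ⟨L, hLK, hL⟩ := Finset.exists_subset_card_eq h
    exact h4 L ⟨hK.subset hLK, hL⟩
  interval_cases hK4 : #K
  · simp [Finset.card_eq_zero.mp hK4]
  · obtain ⟨a, rfl⟩ := Finset.card_eq_one.mp hK4
    simpa using (hbox a).2
  · obtain ⟨a, b, hab, rfl⟩ := Finset.card_eq_two.mp hK4
    rw [Finset.sum_pair hab]
    exact hedge a b (hK (by simp) (by simp) hab)
  · obtain ⟨a, b, c, hab, hac, hbc, rfl⟩ := Finset.card_eq_three.mp hK4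
    rw [Finset.sum_insert (by simp [hab, hac]), Finset.sum_pair hbc, ← add_assoc]
    exact triangle_sum_le_one hodd (hK (by simp) (by simp) hab) (hK (by simp) (by simp) hbc)
      (hK (by simp) (by simp) hac.symm)

theorem convex_tPolytope [DecidableEq V] (G : SimpleGraph V) : Convex ℝ (tPolytope G) := by
  rintro x ⟨hxb, hxe, hxo⟩ y ⟨hyb, hye, hyo⟩ a b ha hb hab
  simp only [tPolytope, boxConstraints, edgeConstraints, oddCycleConstraints, Set.mem_ofPred_eq,
    Pi.add_apply, Pi.smul_apply, smul_eq_mul, Finset.sum_add_distrib, ← Finset.mul_sum]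
  refine ⟨fun v => ⟨?_, ?_⟩, fun u v huv => ?_, fun u c hc hodd => ?_⟩
  · nlinarith [hxb v, hyb v]
  · nlinarith [hxb v, hyb v]
  · nlinarith [hxe u v huv, hye u v huv]
  · calc _ ≤ a * (((c.length : ℝ) - 1) / 2) + b * (((c.length : ℝ) - 1) / 2) :=
          add_le_add (mul_le_mul_of_nonneg_left (hxo u c hc hodd) ha)
            (mul_le_mul_of_nonneg_left (hyo u c hc hodd) hb)
      _ = ((c.length : ℝ) - 1) / 2 := by rw [← add_mul, hab, one_mul]

theorem IsStableSet.indicator_mem_tPolytope [DecidableEq V] {G : SimpleGraph V} {S : Finset V}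
    (hS : IsStableSet G S) : (fun v => if v ∈ S then (1 : ℝ) else 0) ∈ tPolytope G := by
  refine ⟨fun v => by dsimp only; split_ifs <;> norm_num, fun u v huv => ?_,
    fun u c hc hodd => ?_⟩
  · have := fun hu hv => hS u hu v hv huv
    dsimp only
    split_ifs <;> simp_all
  · obtain ⟨k, hk⟩ := hodd
    have h2 := hS.two_mul_card_filter_le_length hc.1
    rw [Finset.sum_boole, hk]
    rw [hk] at h2
    have : #{v ∈ c.support.toFinset | v ∈ S} ≤ k := by omega
    push_cast
    linarith [(Nat.cast_le (α := ℝ)).mpr this]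

theorem stabPolytope_subset_tPolytope [Fintype V] [DecidableEq V] (G : SimpleGraph V) :
    stabPolytope G ⊆ tPolytope G :=
  convexHull_min (by rintro _ ⟨S, hS, rfl⟩; exact hS.indicator_mem_tPolytope) (convex_tPolytope G)

/-- `f` is a colouring with `k` (possibly empty) colour classes of the graph obtained from `G` by
replicating each vertex `v` exactly `p v` times. -/
def IsStableCover [DecidableEq V] (G : SimpleGraph V) (p : V → ℕ) {k : ℕ}
    (f : Fin k → Finset V) : Prop :=
  (∀ i, IsStableSet G (f i)) ∧ ∀ v, #{i | v ∈ f i} = p v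

theorem IsStableSet.card_inter_le_one {G : SimpleGraph V} [DecidableEq V] {S K : Finset V}
    (hS : IsStableSet G S) (hK : G.IsClique (K : Set V)) : #(K ∩ S) ≤ 1 := by
  refine Finset.card_le_one.mpr fun a ha b hb => ?_
  rw [Finset.mem_inter] at ha hb
  by_contra hab
  exact hS a ha.2 b hb.2 (hK ha.1 hb.1 hab)

namespace IsStableCover

variable [DecidableEq V] {G : SimpleGraph V} {p : V → ℕ} {k : ℕ} {f : Fin k → Finset V}

theorem cons {q : V → ℕ} {S : Finset V} (hS : IsStableSet G S) (hf : IsStableCover G q f)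
    (hp : ∀ v, p v = q v + if v ∈ S then 1 else 0) : IsStableCover G p (Fin.cons S f) := by
  refine ⟨Fin.cases hS hf.1, fun v => ?_⟩
  rw [hp, ← hf.2, Finset.card_filter, Finset.card_filter, Fin.sum_univ_succ, add_comm]
  simp only [Fin.cons_zero, Fin.cons_succ]

theorem sum_eq_sum_card_inter (hf : IsStableCover G p f) (K : Finset V) :
    ∑ v ∈ K, p v = ∑ i, #(K ∩ f i) := by
  simp_rw [← hf.2, ← Finset.filter_mem_eq_inter, Finset.card_eq_sum_ones, Finset.sum_filter]
  exact Finset.sum_comm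

theorem inter_nonempty (hf : IsStableCover G p f) {K : Finset V} (hK : G.IsClique (K : Set V))
    (hk : k ≤ ∑ v ∈ K, p v) (i : Fin k) : (K ∩ f i).Nonempty := by
  rw [← Finset.card_pos]
  by_contra! h0
  have : ∑ j, #(K ∩ f j) < ∑ _j : Fin k, 1 :=
    Finset.sum_lt_sum (fun j _ => (hf.1 j).card_inter_le_one hK) ⟨i, Finset.mem_univ i, by omega⟩
  simp only [Finset.sum_const, Finset.card_univ, Fintype.card_fin, smul_eq_mul, mul_one] at this
  rw [hf.sum_eq_sum_card_inter] at hk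
  omega

end IsStableCover

theorem cliqueNumber_induce_le {G : SimpleGraph V} {S : Set V} {k : ℕ}
    (h : ∀ K : Finset V, G.IsClique (K : Set V) → ↑K ⊆ S → #K ≤ k) :
    cliqueNumber (G.induce S) ≤ k := by
  refine sSup_le ?_
  rintro _ ⟨n, ⟨K, hK⟩, rfl⟩
  rw [← hK.card_eq, ← Finset.card_map (Function.Embedding.subtype _)]
  refine Nat.cast_le.mpr (h _ ?_ ?_)
  · simpa using isClique_induce_iff.mp hK.isClique
  · simp

theorem exists_stableCover_of_coloring [DecidableEq V] {G : SimpleGraph V} (P : Finset V) {k : ℕ}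
    (C : (G.induce (P : Set V)).Coloring (Fin k)) :
    ∃ f : Fin k → Finset V, IsStableCover G (fun v => if v ∈ P then 1 else 0) f := by
  refine ⟨fun i => {v ∈ P | ∃ h : v ∈ P, C ⟨v, h⟩ = i}, fun i a ha b hb hab => ?_, fun v => ?_⟩
  · simp only [Finset.mem_filter] at ha hb
    obtain ⟨-, ha, rfl⟩ := ha
    obtain ⟨-, hb, hcol⟩ := hb
    exact C.valid (G := G.induce (P : Set V)) (v := ⟨a, ha⟩) (w := ⟨b, hb⟩) hab hcol.symm
  · dsimp only
    split_ifs with hv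
    · rw [Finset.card_eq_one]
      refine ⟨C ⟨v, hv⟩, ?_⟩
      ext i
      simp [hv, eq_comm]
    · simp [hv]

theorem exists_stableCover_of_le_one [Fintype V] [DecidableEq V] {G : SimpleGraph V}
    (hG : IsPerfect G) {p : V → ℕ} (hp : ∀ v, p v ≤ 1) {k : ℕ}
    (hk : ∀ K : Finset V, G.IsClique (K : Set V) → ∑ v ∈ K, p v ≤ k) :
    ∃ f : Fin k → Finset V, IsStableCover G p f := by
  set P : Finset V := {v | p v = 1}
  have hP : (fun v => if v ∈ P then 1 else 0) = p := by
    funext v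
    have := hp v
    simp only [P, Finset.mem_filter, Finset.mem_univ, true_and]
    split_ifs <;> omega
  obtain ⟨C⟩ : (G.induce (P : Set V)).Colorable k := by
    rw [← chromaticNumber_le_iff_colorable, hG]
    refine cliqueNumber_induce_le fun K hK hKP => ?_
    calc #K = ∑ v ∈ K, p v := by
          rw [Finset.card_eq_sum_ones]
          refine Finset.sum_congr rfl fun v hv => ?_
          exact (Finset.mem_filter.mp (hKP hv)).2.symm
      _ ≤ k := hk K hK
  exact hP ▸ exists_stableCover_of_coloring P C

theorem sum_sub_indicator_lt [DecidableEq V] {s A : Finset V} {p : V → ℕ}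
    (h : ∃ a ∈ s, a ∈ A ∧ 0 < p a) :
    ∑ v ∈ s, (p v - if v ∈ A then 1 else 0) < ∑ v ∈ s, p v := by
  obtain ⟨a, ha, haA, hpa⟩ := h
  exact Finset.sum_lt_sum (fun v _ => Nat.sub_le _ _) ⟨a, ha, by simp [haA]; omega⟩

/-- A clique of weight `k + 1` avoiding `u` is still heavy for `p - 𝟙_u`, so it meets every
colour class of `g`. -/
theorem sum_sub_colorClass_le [DecidableEq V] {G : SimpleGraph V} {p : V → ℕ} {k : ℕ}
    (hk : ∀ K : Finset V, G.IsClique (K : Set V) → ∑ v ∈ K, p v ≤ k + 1) {u : V}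
    {g : Fin (k + 1) → Finset V}
    (hg : IsStableCover G (fun v => p v - if v ∈ ({u} : Finset V) then 1 else 0) g)
    {i : Fin (k + 1)} (hui : u ∈ g i) (hpos : ∀ v ∈ g i, 0 < p v)
    {K : Finset V} (hK : G.IsClique (K : Set V)) :
    ∑ v ∈ K, (p v - if v ∈ g i then 1 else 0) ≤ k := by
  rcases (hk K hK).lt_or_eq with hlt | heq
  · exact (Finset.sum_le_sum fun v _ => Nat.sub_le _ _).trans (by omega)
  obtain ⟨a, ha⟩ : (K ∩ g i).Nonempty := by
    by_cases huK : u ∈ K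
    · exact ⟨u, Finset.mem_inter.mpr ⟨huK, hui⟩⟩
    refine hg.inter_nonempty hK ?_ i
    rw [← heq]
    exact (Finset.sum_congr rfl fun v hv => by simp [ne_of_mem_of_not_mem hv huK]).ge
  rw [Finset.mem_inter] at ha
  have := sum_sub_indicator_lt ⟨a, ha.1, ha.2, hpos a ha.2⟩
  omega

theorem exists_stableCover [Fintype V] [DecidableEq V] {G : SimpleGraph V} (hG : IsPerfect G)
    (p : V → ℕ) (k : ℕ) (hk : ∀ K : Finset V, G.IsClique (K : Set V) → ∑ v ∈ K, p v ≤ k) :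
    ∃ f : Fin k → Finset V, IsStableCover G p f := by
  by_cases hp : ∀ v, p v ≤ 1
  · exact exists_stableCover_of_le_one hG hp hk
  obtain ⟨u, hu⟩ : ∃ u, 1 < p u := by simpa using hp
  have hku : p u ≤ k := by simpa using hk {u} (by simp)
  obtain ⟨k, rfl⟩ : ∃ k', k = k' + 1 := ⟨k - 1, by omega⟩
  obtain ⟨g, hg⟩ := exists_stableCover hG (fun v => p v - if v ∈ ({u} : Finset V) then 1 else 0)
    (k + 1) fun K hK => (Finset.sum_le_sum fun v _ => Nat.sub_le _ _).trans (hk K hK)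
  obtain ⟨i, hui⟩ : ∃ i, u ∈ g i := by
    have : 0 < #{i | u ∈ g i} := by rw [hg.2]; simp; omega
    obtain ⟨i, hi⟩ := Finset.card_pos.mp this
    exact ⟨i, by simpa using hi⟩
  have hpos : ∀ v ∈ g i, 0 < p v := fun v hv => by
    have : 0 < #{j | v ∈ g j} := Finset.card_pos.mpr ⟨i, by simpa⟩
    rw [hg.2] at this
    dsimp only at this
    omega
  obtain ⟨f, hf⟩ := exists_stableCover hG (fun v => p v - if v ∈ g i then 1 else 0) k
    fun K hK => sum_sub_colorClass_le hk hg hui hpos hK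
  refine ⟨Fin.cons (g i) f, hf.cons (hg.1 i) fun v => ?_⟩
  by_cases hv : v ∈ g i
  · have := hpos v hv
    simp only [hv, if_true]
    omega
  · simp [hv]
termination_by ∑ v, p v
decreasing_by
  · exact sum_sub_indicator_lt ⟨u, Finset.mem_univ u, Finset.mem_singleton_self u, by omega⟩
  · exact sum_sub_indicator_lt ⟨u, Finset.mem_univ u, hui, by omega⟩

theorem IsStableCover.div_mem_stabPolytope [Fintype V] [DecidableEq V] {G : SimpleGraph V}
    {p : V → ℕ} {k : ℕ} {f : Fin k → Finset V} (hf : IsStableCover G p f) (hk : 0 < k) :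
    (fun v => (p v : ℝ) / k) ∈ stabPolytope G := by
  have : (fun v => (p v : ℝ) / k) = ∑ i, (k : ℝ)⁻¹ • fun v => if v ∈ f i then (1 : ℝ) else 0 := by
    funext v
    simp [Finset.sum_apply, ← hf.2 v, div_eq_inv_mul, Finset.sum_ite, mul_comm]
  rw [this]
  refine (convex_convexHull ℝ _).sum_mem (fun _ _ => by positivity) ?_
    fun i _ => subset_convexHull ℝ _ ⟨f i, hf.1 i, rfl⟩
  simp
  field_simp

theorem isClosed_stabPolytope [Fintype V] [DecidableEq V] (G : SimpleGraph V) :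
    IsClosed (stabPolytope G) :=
  ((Set.finite_range fun S : Finset V => fun v => if v ∈ S then (1 : ℝ) else 0).subset
    (by rintro _ ⟨S, -, rfl⟩; exact ⟨S, rfl⟩)).isClosed_convexHull ℝ

theorem qstabPolytope_subset_stabPolytope [Fintype V] [DecidableEq V] {G : SimpleGraph V}
    (hG : IsPerfect G) : qstabPolytope G ⊆ stabPolytope G := by
  rintro x ⟨hbox, hclique⟩
  have hmem (N : ℕ) (hN : 0 < N) : (fun v => (⌊x v * N⌋₊ : ℝ) / N) ∈ stabPolytope G := by
    obtain ⟨f, hf⟩ := exists_stableCover hG (fun v => ⌊x v * N⌋₊) N fun K hK => by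
      have : (∑ v ∈ K, ⌊x v * N⌋₊ : ℝ) ≤ N :=
        calc (∑ v ∈ K, ⌊x v * N⌋₊ : ℝ) ≤ ∑ v ∈ K, x v * N :=
              Finset.sum_le_sum fun v _ => Nat.floor_le (by have := (hbox v).1; positivity)
          _ = (∑ v ∈ K, x v) * N := (Finset.sum_mul ..).symm
          _ ≤ N := mul_le_of_le_one_left (Nat.cast_nonneg N) (hclique K hK)
      exact_mod_cast this
    exact hf.div_mem_stabPolytope hN
  refine (isClosed_stabPolytope G).mem_of_tendsto (tendsto_pi_nhds.mpr fun v => ?_)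
    ((Filter.eventually_gt_atTop 0).mono hmem)
  exact (tendsto_nat_floor_mul_div_atTop (hbox v).1).comp tendsto_natCast_atTop_atTop

/-- Every perfect finite simple graph containing no clique on four
vertices is t-perfect. -/
theorem tPerfect_of_isPerfect_cliqueFree {V : Type*} [Fintype V] [DecidableEq V]
    (G : SimpleGraph V) (h : IsPerfect G) (h4 : G.CliqueFree 4) :
    TPerfect G :=
  ((tPolytope_subset_qstabPolytope h4).trans (qstabPolytope_subset_stabPolytope h)).antisymm
    (stabPolytope_subset_tPolytope G)

end TPerfection
end

section
/- The graph C_10^2, with vertex set ℤ/10ℤ and i adjacent to j if and only if i − j ≡ ±1 or ±2 (mod 10), is not t-perfect. -/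
open Finset SimpleGraph

namespace TPerfection

variable {V : Type*}

/-- The graph `C₁₀²`: vertex set `ℤ/10ℤ`, with `i` adjacent to `j` iff
`i - j ≡ ±1` or `±2 (mod 10)`. -/
def C10sq : SimpleGraph (ZMod 10) where
  Adj i j := i - j = 1 ∨ i - j = -1 ∨ i - j = 2 ∨ i - j = -2
  symm := by
    constructor
    intro i j h
    beta_reduce at h ⊢
    have hji : j - i = -(i - j) := by ring
    rcases h with h | h | h | h <;> rw [hji, h] <;> decide
  loopless := by
    constructor
    intro i h
    rcases h with h | h | h | h <;> rw [sub_self] at h <;> exact absurd h (by decide)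

/-!
The constant vector `1/3` satisfies every edge constraint, and every odd-cycle constraint since a
cycle of length `k ≥ 3` carries weight `k/3 ≤ (k - 1)/2`; its total weight on `C₁₀²` is `10/3`.
On the other hand the blocks `{v, v + 1, v + 2}` of the vertices `v` of a stable set of `C₁₀²`
are pairwise disjoint, so a stable set has at most `3` vertices, and every point of `STAB(C₁₀²)`
has total weight at most `3`.
-/

theorem _root_.SimpleGraph.Walk.card_support_toFinset_le_length [DecidableEq V]
    {G : SimpleGraph V} {u : V} {c : G.Walk u u} (hc : ¬ c.Nil) :
    #c.support.toFinset ≤ c.length := by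
  rw [← c.cons_tail_support, List.toFinset_cons,
    insert_eq_of_mem (List.mem_toFinset.2 (Walk.end_mem_tail_support hc))]
  refine (List.toFinset_card_le _).trans ?_
  simp [Walk.length_support]

theorem const_third_mem_tPolytope [DecidableEq V] (G : SimpleGraph V) :
    (fun _ => (1 / 3 : ℝ)) ∈ tPolytope G := by
  refine ⟨fun _ => by norm_num, fun _ _ _ => by norm_num, fun _ c hc _ => ?_⟩
  have hcard : (#c.support.toFinset : ℝ) ≤ c.length := by
    exact_mod_cast c.card_support_toFinset_le_length hc.1.not_nil
  have hlen : (3 : ℝ) ≤ c.length := by exact_mod_cast hc.1.three_le_length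
  rw [sum_const, nsmul_eq_mul]
  linarith

theorem sum_le_of_mem_stabPolytope [Fintype V] [DecidableEq V] {G : SimpleGraph V} {k : ℕ}
    (hk : ∀ S, IsStableSet G S → #S ≤ k) {x : V → ℝ} (hx : x ∈ stabPolytope G) :
    ∑ v, x v ≤ k := by
  have hlin : IsLinearMap ℝ fun y : V → ℝ => ∑ v, y v :=
    ⟨fun _ _ => sum_add_distrib, fun _ _ => by simp [mul_sum]⟩
  refine convexHull_min ?_ (convex_halfSpace_le hlin (k : ℝ)) hx
  rintro _ ⟨S, hS, rfl⟩
  simpa using hk S hS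

theorem C10sq_eq_or_adj_of_add_eq_add {v w a b : ZMod 10} (ha : a ∈ ({0, 1, 2} : Finset _))
    (hb : b ∈ ({0, 1, 2} : Finset _)) (h : v + a = w + b) : v = w ∨ C10sq.Adj v w := by
  have hvw : v - w = b - a := by linear_combination h
  rw [← sub_eq_zero]
  change v - w = 0 ∨ v - w = 1 ∨ v - w = -1 ∨ v - w = 2 ∨ v - w = -2
  simp only [mem_insert, mem_singleton] at ha hb
  rcases ha with rfl | rfl | rfl <;> rcases hb with rfl | rfl | rfl <;> rw [hvw] <;> decide

theorem C10sq_card_le_three_of_isStableSet {S : Finset (ZMod 10)} (hS : IsStableSet C10sq S) :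
    #S ≤ 3 := by
  let block : ZMod 10 → Finset (ZMod 10) := fun v => image (v + ·) {0, 1, 2}
  have hcard (v : ZMod 10) : #(block v) = 3 := by
    rw [card_image_of_injective _ (add_right_injective v)]
    rfl
  have hdisj : (S : Set (ZMod 10)).PairwiseDisjoint block := by
    intro v hv w hw hne
    rw [Function.onFun, Finset.disjoint_left]
    intro z hzv hzw
    obtain ⟨a, ha, rfl⟩ := mem_image.1 hzv
    obtain ⟨b, hb, hba⟩ := mem_image.1 hzw
    exact (C10sq_eq_or_adj_of_add_eq_add ha hb hba.symm).elim hne (hS v hv w hw)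
  have hblocks : 3 * #S ≤ 10 :=
    calc 3 * #S = #(S.biUnion block) := by
          rw [card_biUnion hdisj, sum_const_nat fun v _ => hcard v, mul_comm]
      _ ≤ 10 := (card_le_univ _).trans_eq (ZMod.card 10)
  omega

/-- The graph `C₁₀²` is not t-perfect. -/
theorem C10sq_not_tPerfect : ¬ TPerfect C10sq := by
  intro h
  have hx : (fun _ => (1 / 3 : ℝ)) ∈ stabPolytope C10sq := h ▸ const_third_mem_tPolytope C10sq
  have hweight := sum_le_of_mem_stabPolytope @C10sq_card_le_three_of_isStableSet hx
  norm_num at hweight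

end TPerfection
end
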